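/- Let N ≥ 1, f : Fin N → Fin N and Λ ⊆ Fin N, and let τ be the transient period of f and I the maximum invariant subset of Λ. Suppose the system is globally approximately synchronous. Then the global shortest approximate synchronization time — the least integer ρ ≥ 1 such that f^[t] x ∈ Λ for all x ∈ Fin N and all t ≥ ρ — equals the least integer t ≥ 1 such that f^[t] x ∈ I for all x ∈ Fin N; moreover this value is at most max(τ, 1). -/

import Mathlib

/-!
The maximum invariant subset of `Λ` is exactly the set of states whose whole forward orbit
stays in `Λ`. Hence "`f^[t] x ∈ Λ` for all `t ≥ ρ`" says precisely that `f^[ρ] x` lies in it,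
so the two sets of times in the theorem coincide. Once the orbits are synchronized, every
periodic point is in `Λ` (it recurs at arbitrarily late times), so the invariant set of periodic
points lies in the maximum invariant subset, which every orbit reaches after the transient
period `τ`.
-/

open Function Set

namespace Function

variable {α : Type*} (f : α → α) (Λ : Set α)

def maxInvariantSubset : Set α :=
  ⋃₀ {S | S ⊆ Λ ∧ f '' S ⊆ S}

theorem maxInvariantSubset_eq : maxInvariantSubset f Λ = {y | ∀ n, f^[n] y ∈ Λ} := by
  ext y
  constructor
  · rintro ⟨S, ⟨hSΛ, hSf⟩, hyS⟩ n
    exact hSΛ ((mapsTo_iff_image_subset.2 hSf).iterate n hyS)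
  · intro hy
    refine ⟨{y | ∀ n, f^[n] y ∈ Λ}, ⟨fun z hz => hz 0, ?_⟩, hy⟩
    rintro _ ⟨z, hz, rfl⟩ n
    simpa only [← iterate_succ_apply] using hz (n + 1)

variable {f Λ}

theorem forall_iterate_ge_mem_iff (ρ : ℕ) (x : α) :
    (∀ t ≥ ρ, f^[t] x ∈ Λ) ↔ f^[ρ] x ∈ maxInvariantSubset f Λ := by
  simp only [maxInvariantSubset_eq, mem_ofPred_eq, ← iterate_add_apply]
  refine ⟨fun h n => h _ (Nat.le_add_left ρ n), fun h t ht => ?_⟩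
  simpa only [Nat.sub_add_cancel ht] using h (t - ρ)

theorem periodicPts_subset_of_forall_iterate_ge_mem {ρ : ℕ}
    (hsync : ∀ x, ∀ t ≥ ρ, f^[t] x ∈ Λ) : periodicPts f ⊆ Λ := by
  rintro y ⟨n, hn, hy⟩
  simpa only [(hy.const_mul ρ).eq] using hsync y (ρ * n) (Nat.le_mul_of_pos_right ρ hn)

theorem periodicPts_subset_maxInvariantSubset {ρ : ℕ}
    (hsync : ∀ x, ∀ t ≥ ρ, f^[t] x ∈ Λ) : periodicPts f ⊆ maxInvariantSubset f Λ :=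
  fun _ hy => (maxInvariantSubset_eq f Λ).symm ▸ fun n =>
    periodicPts_subset_of_forall_iterate_ge_mem hsync
      ((Commute.iterate_self f n).mapsTo_periodicPts hy)

end Function

theorem global_shortest_sync_time_eq_general (N : ℕ) (f : Fin N → Fin N)
    (Λ : Set (Fin N))
    (τ : ℕ) (hτ : IsLeast {t : ℕ | ∀ x : Fin N, f^[t] x ∈ Function.periodicPts f} τ)
    (I : Set (Fin N)) (hI : I = ⋃₀ {S : Set (Fin N) | S ⊆ Λ ∧ f '' S ⊆ S})
    (hsync : ∃ ρ : ℕ, 1 ≤ ρ ∧ ∀ x : Fin N, ∀ t ≥ ρ, f^[t] x ∈ Λ) :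
    sInf {ρ : ℕ | 1 ≤ ρ ∧ ∀ x : Fin N, ∀ t ≥ ρ, f^[t] x ∈ Λ} =
        sInf {t : ℕ | 1 ≤ t ∧ ∀ x : Fin N, f^[t] x ∈ I} ∧
      sInf {ρ : ℕ | 1 ≤ ρ ∧ ∀ x : Fin N, ∀ t ≥ ρ, f^[t] x ∈ Λ} ≤ max τ 1 := by
  change I = maxInvariantSubset f Λ at hI
  subst hI
  have hsets : {ρ : ℕ | 1 ≤ ρ ∧ ∀ x : Fin N, ∀ t ≥ ρ, f^[t] x ∈ Λ} =
      {t : ℕ | 1 ≤ t ∧ ∀ x : Fin N, f^[t] x ∈ maxInvariantSubset f Λ} := by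
    simp only [forall_iterate_ge_mem_iff]
  refine ⟨congrArg sInf hsets, Nat.sInf_le ?_⟩
  obtain ⟨ρ, -, hρ⟩ := hsync
  refine hsets ▸ ⟨le_max_right τ 1, fun x => periodicPts_subset_maxInvariantSubset hρ ?_⟩
  rw [← Nat.sub_add_cancel (le_max_left τ 1), iterate_add_apply]
  exact (Commute.iterate_self f _).mapsTo_periodicPts (hτ.1 x)

/-- Theorem 2(2): if the system is globally approximately synchronous, the
global shortest approximate synchronization time equals the least `t ≥ 1`
such that `f^[t]` maps every state into the maximum invariant subset `I`
of `Λ`, and it is at most `max τ 1`. -/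
theorem global_shortest_sync_time_eq (N : ℕ) (hN : 1 ≤ N) (f : Fin N → Fin N)
    (Λ : Set (Fin N))
    (τ : ℕ) (hτ : IsLeast {t : ℕ | ∀ x : Fin N, f^[t] x ∈ Function.periodicPts f} τ)
    (I : Set (Fin N)) (hI : I = ⋃₀ {S : Set (Fin N) | S ⊆ Λ ∧ f '' S ⊆ S})
    (hsync : ∃ ρ : ℕ, 1 ≤ ρ ∧ ∀ x : Fin N, ∀ t ≥ ρ, f^[t] x ∈ Λ) :
    sInf {ρ : ℕ | 1 ≤ ρ ∧ ∀ x : Fin N, ∀ t ≥ ρ, f^[t] x ∈ Λ} =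
        sInf {t : ℕ | 1 ≤ t ∧ ∀ x : Fin N, f^[t] x ∈ I} ∧
      sInf {ρ : ℕ | 1 ≤ ρ ∧ ∀ x : Fin N, ∀ t ≥ ρ, f^[t] x ∈ Λ} ≤ max τ 1 :=
  global_shortest_sync_time_eq_general N f Λ τ hτ I hI hsync
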